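/- arXiv:1806.02160 — 7 statements merged into one kernel-verified Lean document; each statement's English description precedes it below -/
import Mathlib

section
/- Consistency of GMJMCMC (Theorem 1): Let M be a finite nonempty set of models with a weight function w : M → ℝ satisfying w m > 0 for all m ∈ M (representing the unnormalized posterior mass p(m)·p(y|m)). Let X be a finite nonempty state space, let (X_t)_{t∈ℕ} be a Markov chain on X with irreducible transition matrix P and arbitrary initial distribution, and let v : X → Finset M assign to each state the set of models visited there, with ⋃_{x ∈ X} v(x) = M. For T ∈ ℕ let V_T = ⋃_{t ≤ T} v(X_t) and define the estimator p̂_T(m) = w(m)·1[m ∈ V_T] / (∑_{m' ∈ V_T} w(m')). Then almost surely there exists T₀ such that V_T = M for all T ≥ T₀, and consequently, almost surely, for every m ∈ M the estimate p̂_T(m) converges as T → ∞ to the true posterior probability w(m) / (∑_{m' ∈ M} w(m')). -/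
open MeasureTheory Filter

/-- A stochastic matrix on a finite type: nonnegative entries, rows summing to one. -/
def IsStochastic {X : Type*} [Fintype X] (P : X → X → ℝ) : Prop :=
  (∀ x y, 0 ≤ P x y) ∧ ∀ x, ∑ y, P x y = 1

/-- Irreducibility: any state can be reached from any state in some number `n ≥ 1` of steps. -/
def IsIrreducibleMC {X : Type*} [Fintype X] [DecidableEq X] (P : X → X → ℝ) : Prop :=
  ∀ x y, ∃ n : ℕ, 1 ≤ n ∧ 0 < (Matrix.of P ^ n) x y

/-- `Xs` is a Markov chain with transition matrix `P` (and arbitrary initial distribution):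
each `Xs t` is measurable, and conditional on any history of positive probability the next
state is distributed according to `P`, expressed in product form. -/
def IsMarkovChain {X : Type*} [Fintype X] [MeasurableSpace X] [MeasurableSingletonClass X]
    {Ω : Type*} [MeasurableSpace Ω] (μ : Measure Ω)
    (P : X → X → ℝ) (Xs : ℕ → Ω → X) : Prop :=
  (∀ t, Measurable (Xs t)) ∧
  ∀ (t : ℕ) (path : ℕ → X) (y : X),
    μ {ω | ∀ s ≤ t, Xs s ω = path s} ≠ 0 →
    (μ {ω | (∀ s ≤ t, Xs s ω = path s) ∧ Xs (t + 1) ω = y}).toReal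
      = (μ {ω | ∀ s ≤ t, Xs s ω = path s}).toReal * P (path t) y

/-!
By irreducibility, from every state `x` the chain reaches a fixed state `y` at some time
`n x ≤ N` with probability `(P ^ n x) x y ≥ δ > 0`. Splitting the event "`y` not visited up to
time `T`" according to the history of the chain, the Markov property shows that `y` is then still
not visited up to time `T + N` with probability at most `1 - δ` times that of the event; hence `y`
is never visited with probability zero. So almost surely every state, and with it every model, is
visited, after which `V_T = M` and the estimator is exactly `w m / ∑ m', w m'`.
-/

lemma IsStochastic.mem_rowStochastic {X : Type*} [Fintype X] [DecidableEq X] {P : X → X → ℝ}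
    (hP : IsStochastic P) : Matrix.of P ∈ Matrix.rowStochastic ℝ X :=
  Matrix.mem_rowStochastic_iff_sum.2 hP

lemma IsStochastic.pow_apply_le_one {X : Type*} [Fintype X] [DecidableEq X] {P : X → X → ℝ}
    (hP : IsStochastic P) (n : ℕ) (x y : X) : (Matrix.of P ^ n) x y ≤ 1 :=
  Matrix.le_one_of_mem_rowStochastic (pow_mem hP.mem_rowStochastic n)

lemma measureReal_eq_sum_inter_preimage {α β : Type*} [MeasurableSpace α] [Fintype β]
    [MeasurableSpace β] [MeasurableSingletonClass β] {μ : Measure α} [IsFiniteMeasure μ]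
    {f : α → β} (hf : Measurable f) {A : Set α} (hA : MeasurableSet A) :
    μ.real A = ∑ b, μ.real (A ∩ f ⁻¹' {b}) := by
  have := sum_measureReal_preimage_singleton (μ := μ.restrict A) Finset.univ
    (fun b _ => hf (measurableSet_singleton b))
  simp_all [measureReal_restrict_apply, Set.inter_comm]

section History

variable {X Ω : Type*} {Xs : ℕ → Ω → X}

def history (Xs : ℕ → Ω → X) (t : ℕ) (ω : Ω) : Fin (t + 1) → X := fun i => Xs i ω

lemma measurable_history [MeasurableSpace X] [MeasurableSpace Ω] (hX : ∀ t, Measurable (Xs t))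
    (t : ℕ) : Measurable (history Xs t) :=
  measurable_pi_lambda _ fun i => hX i

lemma measurableSet_history_preimage [MeasurableSpace X] [Countable X] [MeasurableSingletonClass X]
    [MeasurableSpace Ω] (hX : ∀ t, Measurable (Xs t)) (t : ℕ) (S : Set (Fin (t + 1) → X)) :
    MeasurableSet (history Xs t ⁻¹' S) :=
  measurable_history hX t S.to_countable.measurableSet

lemma history_succ (t : ℕ) (ω : Ω) :
    history Xs (t + 1) ω = Fin.snoc (history Xs t ω) (Xs (t + 1) ω) := by
  rw [← Fin.snoc_init_self (history Xs (t + 1) ω)]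
  rfl

lemma history_preimage_snoc (t : ℕ) (p : Fin (t + 1) → X) (z : X) :
    history Xs (t + 1) ⁻¹' {Fin.snoc p z} = history Xs t ⁻¹' {p} ∩ Xs (t + 1) ⁻¹' {z} := by
  ext ω
  simp [history_succ]

lemma history_preimage_singleton (t : ℕ) (path : ℕ → X) :
    history Xs t ⁻¹' {fun i : Fin (t + 1) => path i} = {ω | ∀ s ≤ t, Xs s ω = path s} := by
  ext ω
  simp [history, funext_iff, Fin.forall_iff]

lemma exists_restrict_eq {t : ℕ} (p : Fin (t + 1) → X) :
    ∃ path : ℕ → X, (fun i : Fin (t + 1) => path i) = p :=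
  ⟨fun s => p ⟨min s t, by omega⟩, funext fun i => congrArg p (Fin.ext (by simp; omega))⟩

end History

namespace IsMarkovChain

variable {X : Type*} [Fintype X] [MeasurableSpace X] [MeasurableSingletonClass X]
  {Ω : Type*} [MeasurableSpace Ω] {μ : Measure Ω} {P : X → X → ℝ} {Xs : ℕ → Ω → X}

lemma measureReal_history_inter_succ (hc : IsMarkovChain μ P Xs) (t : ℕ)
    (p : Fin (t + 1) → X) (y : X) :
    μ.real (history Xs t ⁻¹' {p} ∩ Xs (t + 1) ⁻¹' {y}) =
      μ.real (history Xs t ⁻¹' {p}) * P (p (Fin.last t)) y := by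
  obtain ⟨path, rfl⟩ := exists_restrict_eq p
  rw [history_preimage_singleton]
  by_cases h : μ {ω | ∀ s ≤ t, Xs s ω = path s} = 0
  · simp [Measure.real, h, measure_mono_null Set.inter_subset_left h]
  · exact hc.2 t path y h

section FiniteMeasure

variable [DecidableEq X] [IsFiniteMeasure μ]

lemma measureReal_history_inter_pow (hc : IsMarkovChain μ P Xs) (n t : ℕ)
    (p : Fin (t + 1) → X) (y : X) :
    μ.real (history Xs t ⁻¹' {p} ∩ Xs (t + n) ⁻¹' {y}) =
      μ.real (history Xs t ⁻¹' {p}) * (Matrix.of P ^ n) (p (Fin.last t)) y := by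
  induction n generalizing t p y with
  | zero =>
    have hlast : history Xs t ⁻¹' {p} ⊆ Xs t ⁻¹' {p (Fin.last t)} :=
      fun ω (hω : history Xs t ω = p) => congrFun hω (Fin.last t)
    by_cases h : p (Fin.last t) = y
    · subst h
      simp [Set.inter_eq_left.2 hlast]
    · simp [h, Set.disjoint_iff_inter_eq_empty.1
        (((Set.disjoint_singleton.2 h).preimage (Xs t)).mono_left hlast)]
  | succ n ih =>
    have hH := measurable_history hc.1 t (measurableSet_singleton p)
    calc μ.real (history Xs t ⁻¹' {p} ∩ Xs (t + (n + 1)) ⁻¹' {y})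
        = ∑ z, μ.real (history Xs (t + 1) ⁻¹' {Fin.snoc p z} ∩ Xs (t + 1 + n) ⁻¹' {y}) := by
          rw [measureReal_eq_sum_inter_preimage (hc.1 (t + 1))
            (hH.inter (hc.1 _ (measurableSet_singleton y)))]
          simp only [history_preimage_snoc, Set.inter_right_comm _ (Xs (t + 1) ⁻¹' _),
            add_right_comm t 1 n, add_assoc]
      _ = ∑ z, μ.real (history Xs t ⁻¹' {p}) * P (p (Fin.last t)) z * (Matrix.of P ^ n) z y := by
          refine Finset.sum_congr rfl fun z _ => ?_
          rw [ih, Fin.snoc_last, history_preimage_snoc, hc.measureReal_history_inter_succ]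
      _ = μ.real (history Xs t ⁻¹' {p}) * (Matrix.of P ^ (n + 1)) (p (Fin.last t)) y := by
          simp only [pow_succ', Matrix.mul_apply, Finset.mul_sum, Matrix.of_apply, mul_assoc]

lemma measureReal_history_preimage_inter_pow (hc : IsMarkovChain μ P Xs) (t n : ℕ)
    (S : Set (Fin (t + 1) → X)) (x y : X) :
    μ.real (history Xs t ⁻¹' S ∩ Xs t ⁻¹' {x} ∩ Xs (t + n) ⁻¹' {y}) =
      μ.real (history Xs t ⁻¹' S ∩ Xs t ⁻¹' {x}) * (Matrix.of P ^ n) x y := by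
  set E := history Xs t ⁻¹' S ∩ Xs t ⁻¹' {x}
  have hE : MeasurableSet E :=
    (measurableSet_history_preimage hc.1 t S).inter (hc.1 t (measurableSet_singleton x))
  rw [measureReal_eq_sum_inter_preimage (measurable_history hc.1 t) hE,
    measureReal_eq_sum_inter_preimage (measurable_history hc.1 t)
      (hE.inter (hc.1 _ (measurableSet_singleton y))), Finset.sum_mul]
  refine Finset.sum_congr rfl fun p _ => ?_
  by_cases hp : p ∈ S ∧ p (Fin.last t) = x
  · have hEp : E ∩ history Xs t ⁻¹' {p} = history Xs t ⁻¹' {p} :=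
      Set.inter_eq_right.2 fun ω (hω : history Xs t ω = p) =>
        ⟨show history Xs t ω ∈ S from hω ▸ hp.1, hp.2 ▸ congrFun hω (Fin.last t)⟩
    rw [Set.inter_right_comm, hEp, hc.measureReal_history_inter_pow, hp.2]
  · have hEp : E ∩ history Xs t ⁻¹' {p} = ∅ := by
      refine Set.eq_empty_of_forall_notMem fun ω ⟨⟨hS, hx⟩, (hω : history Xs t ω = p)⟩ => hp ?_
      exact ⟨hω ▸ hS, hω ▸ hx⟩
    rw [Set.inter_right_comm, hEp]
    simp

lemma measureReal_avoid_add_le (hc : IsMarkovChain μ P Xs) {y : X} {N : ℕ} {n : X → ℕ}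
    {δ : ℝ} (hnN : ∀ x, n x ≤ N) (hδ : ∀ x, δ ≤ (Matrix.of P ^ n x) x y) (T : ℕ) :
    μ.real {ω | ∀ s ≤ T + N, Xs s ω ≠ y} ≤ (1 - δ) * μ.real {ω | ∀ s ≤ T, Xs s ω ≠ y} := by
  set A := history Xs T ⁻¹' {p | ∀ i, p i ≠ y}
  have hA : A = {ω | ∀ s ≤ T, Xs s ω ≠ y} := by
    ext ω
    simp [A, history, Fin.forall_iff]
  rw [← hA]
  calc μ.real {ω | ∀ s ≤ T + N, Xs s ω ≠ y}
      ≤ μ.real (⋃ x, (A ∩ Xs T ⁻¹' {x}) \ Xs (T + n x) ⁻¹' {y}) := by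
        refine measureReal_mono fun ω hω => Set.mem_iUnion.2 ⟨Xs T ω, ⟨?_, rfl⟩, ?_⟩
        · rw [hA]
          exact fun s hs => hω s (by omega)
        · exact hω _ (by have := hnN (Xs T ω); omega)
    _ ≤ ∑ x, μ.real ((A ∩ Xs T ⁻¹' {x}) \ Xs (T + n x) ⁻¹' {y}) := measureReal_iUnion_fintype_le _
    _ = ∑ x, μ.real (A ∩ Xs T ⁻¹' {x}) * (1 - (Matrix.of P ^ n x) x y) := by
        refine Finset.sum_congr rfl fun x _ => ?_
        have hsplit := measureReal_inter_add_sdiff (μ := μ) (s := A ∩ Xs T ⁻¹' {x})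
          (hc.1 (T + n x) (measurableSet_singleton y))
        rw [hc.measureReal_history_preimage_inter_pow] at hsplit
        linear_combination hsplit
    _ ≤ ∑ x, (1 - δ) * μ.real (A ∩ Xs T ⁻¹' {x}) :=
        Finset.sum_le_sum fun x _ => (mul_comm _ _).trans_le
          (mul_le_mul_of_nonneg_right (by linarith [hδ x]) measureReal_nonneg)
    _ = (1 - δ) * μ.real A := by
        rw [← Finset.mul_sum, ← measureReal_eq_sum_inter_preimage (hc.1 T)
          (measurableSet_history_preimage hc.1 T _)]

end FiniteMeasure

theorem ae_exists_eq [DecidableEq X] [IsProbabilityMeasure μ] (hP : IsStochastic P)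
    (hirr : IsIrreducibleMC P) (hc : IsMarkovChain μ P Xs) (y : X) : ∀ᵐ ω ∂μ, ∃ t, Xs t ω = y := by
  choose n hn using fun x => (hirr x y).imp fun _ h => h.2
  set δ := Finset.univ.inf' ⟨y, Finset.mem_univ y⟩ fun x => (Matrix.of P ^ n x) x y
  have hδ_pos : 0 < δ := (Finset.lt_inf'_iff _).2 fun x _ => hn x
  have hδ : ∀ x, δ ≤ (Matrix.of P ^ n x) x y := fun x => Finset.inf'_le _ (Finset.mem_univ x)
  have hδ_le_one : δ ≤ 1 := (hδ y).trans (hP.pow_apply_le_one _ _ _)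
  set N := Finset.univ.sup n
  have hdecay : ∀ k : ℕ, μ.real {ω | ∀ s ≤ k * N, Xs s ω ≠ y} ≤ (1 - δ) ^ k := by
    intro k
    induction k with
    | zero => simp
    | succ k ih =>
      calc μ.real {ω | ∀ s ≤ (k + 1) * N, Xs s ω ≠ y}
          ≤ (1 - δ) * μ.real {ω | ∀ s ≤ k * N, Xs s ω ≠ y} := by
            rw [add_one_mul]
            exact hc.measureReal_avoid_add_le (fun x => Finset.le_sup (Finset.mem_univ x)) hδ _
        _ ≤ (1 - δ) ^ (k + 1) := by
            rw [pow_succ']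
            gcongr
  have hnever_le : ∀ k : ℕ, μ.real {ω | ∀ t, Xs t ω ≠ y} ≤ (1 - δ) ^ k := fun k =>
    (hdecay k).trans' (measureReal_mono fun ω hω s _ => hω s)
  have hnever : μ.real {ω | ∀ t, Xs t ω ≠ y} = 0 :=
    le_antisymm (ge_of_tendsto (tendsto_pow_atTop_nhds_zero_of_lt_one (by linarith) (by linarith))
      (Eventually.of_forall hnever_le)) measureReal_nonneg
  rw [measureReal_eq_zero_iff] at hnever
  simpa [ae_iff] using hnever

end IsMarkovChain

lemma eventually_biUnion_range_eq_univ {M X : Type*} [Fintype M] [DecidableEq M]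
    (v : X → Finset M) (x : ℕ → X) (h : ∀ m, ∃ t, m ∈ v (x t)) :
    ∀ᶠ T in atTop, (Finset.range (T + 1)).biUnion (fun t => v (x t)) = Finset.univ := by
  choose τ hτ using h
  filter_upwards [eventually_ge_atTop (Finset.univ.sup τ)] with T hT
  refine Finset.eq_univ_of_forall fun m => Finset.mem_biUnion.2 ⟨τ m, ?_, hτ m⟩
  exact Finset.mem_range.2 (Nat.lt_succ_of_le ((Finset.le_sup (Finset.mem_univ m)).trans hT))

theorem gmjmcmc_consistency_general
    {M : Type*} [Fintype M] [DecidableEq M]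
    {X : Type*} [Fintype X] [DecidableEq X]
    [MeasurableSpace X] [MeasurableSingletonClass X]
    (w : M → ℝ)
    (P : X → X → ℝ) (hP : IsStochastic P) (hirr : IsIrreducibleMC P)
    {Ω : Type*} [MeasurableSpace Ω] (μ : Measure Ω) [IsProbabilityMeasure μ]
    (Xs : ℕ → Ω → X) (hchain : IsMarkovChain μ P Xs)
    (v : X → Finset M) (hv : ∀ m : M, ∃ x : X, m ∈ v x) :
    ∀ᵐ ω ∂μ,
      (∃ T₀ : ℕ, ∀ T ≥ T₀,
        (Finset.range (T + 1)).biUnion (fun t => v (Xs t ω)) = Finset.univ) ∧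
      ∀ m : M,
        Tendsto
          (fun T : ℕ =>
            w m * (if m ∈ (Finset.range (T + 1)).biUnion (fun t => v (Xs t ω)) then 1 else 0) /
              ∑ m' ∈ (Finset.range (T + 1)).biUnion (fun t => v (Xs t ω)), w m')
          atTop (nhds (w m / ∑ m' : M, w m')) := by
  choose xm hxm using hv
  have hvisit : ∀ᵐ ω ∂μ, ∀ m, ∃ t, Xs t ω = xm m :=
    ae_all_iff.2 fun m => hchain.ae_exists_eq hP hirr (xm m)
  filter_upwards [hvisit] with ω hω
  have hcover := eventually_biUnion_range_eq_univ v (fun t => Xs t ω)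
    fun m => (hω m).imp fun t (ht : Xs t ω = xm m) => ht ▸ hxm m
  refine ⟨eventually_atTop.1 hcover, fun m => tendsto_const_nhds.congr' ?_⟩
  filter_upwards [hcover] with T hT
  simp [hT]

/-- **Consistency of GMJMCMC (Theorem 1).**  Let `w` be a positive weight function on a
finite nonempty set of models `M` (the unnormalized posterior mass), let `Xs` be a Markov
chain on a finite state space `X` with irreducible transition matrix `P`, and let
`v : X → Finset M` assign to each state the set of models visited there, covering all of `M`.
Then almost surely the set `V_T = ⋃_{t ≤ T} v(X_t)` eventually equals all of `M`, and the
renormalized estimates `w(m)·1[m ∈ V_T] / ∑_{m' ∈ V_T} w(m')` converge, for every model `m`,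
to the true posterior probability `w(m) / ∑_{m'} w(m')`. -/
theorem gmjmcmc_consistency
    {M : Type*} [Fintype M] [Nonempty M] [DecidableEq M]
    {X : Type*} [Fintype X] [Nonempty X] [DecidableEq X]
    [MeasurableSpace X] [MeasurableSingletonClass X]
    (w : M → ℝ) (hw : ∀ m, 0 < w m)
    (P : X → X → ℝ) (hP : IsStochastic P) (hirr : IsIrreducibleMC P)
    {Ω : Type*} [MeasurableSpace Ω] (μ : Measure Ω) [IsProbabilityMeasure μ]
    (Xs : ℕ → Ω → X) (hchain : IsMarkovChain μ P Xs)
    (v : X → Finset M) (hv : ∀ m : M, ∃ x : X, m ∈ v x) :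
    ∀ᵐ ω ∂μ,
      (∃ T₀ : ℕ, ∀ T ≥ T₀,
        (Finset.range (T + 1)).biUnion (fun t => v (Xs t ω)) = Finset.univ) ∧
      ∀ m : M,
        Tendsto
          (fun T : ℕ =>
            w m * (if m ∈ (Finset.range (T + 1)).biUnion (fun t => v (Xs t ω)) then 1 else 0) /
              ∑ m' ∈ (Finset.range (T + 1)).biUnion (fun t => v (Xs t ω)), w m')
          atTop (nhds (w m / ∑ m' : M, w m')) :=
  gmjmcmc_consistency_general w P hP hirr μ Xs hchain v hv
end

section
/- An irreducible Markov chain on a finite state space visits every state: if P is an irreducible stochastic matrix on a finite nonempty type X and (X_t)_{t∈ℕ} is a Markov chain with transition matrix P and arbitrary initial distribution, then for every state x ∈ X, almost surely the set {t ∈ ℕ : X_t = x} is nonempty; in fact, almost surely this set is infinite. -/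
open MeasureTheory Filter

set_option linter.unusedSectionVars false

section Aux

variable {X : Type*} [Fintype X] [DecidableEq X]
    [MeasurableSpace X] [MeasurableSingletonClass X]
    {Ω : Type*} [MeasurableSpace Ω] {μ : Measure Ω} [IsProbabilityMeasure μ]
    {P : X → X → ℝ} {Xs : ℕ → Ω → X}

/-- The history event. -/
def Hist (Xs : ℕ → Ω → X) (path : ℕ → X) (T : ℕ) : Set Ω :=
  {ω | ∀ s ≤ T, Xs s ω = path s}

lemma measurableSet_hist (hXs : ∀ t, Measurable (Xs t)) (path : ℕ → X) (T : ℕ) :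
    MeasurableSet (Hist Xs path T) := by
  have : Hist Xs path T = ⋂ s, ⋂ (_ : s ≤ T), (Xs s) ⁻¹' {path s} := by
    ext ω; simp [Hist]
  rw [this]
  exact MeasurableSet.iInter fun s =>
    MeasurableSet.iInter fun _ => (hXs s) (measurableSet_singleton _)

lemma hist_step (hchain : IsMarkovChain μ P Xs) (path : ℕ → X) (T : ℕ) (y : X) :
    (μ (Hist Xs path T ∩ {ω | Xs (T + 1) ω = y})).toReal
      = (μ (Hist Xs path T)).toReal * P (path T) y := by
  by_cases h : μ (Hist Xs path T) = 0
  · have h2 : μ (Hist Xs path T ∩ {ω | Xs (T + 1) ω = y}) = 0 :=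
      measure_mono_null Set.inter_subset_left h
    simp [h, h2]
  · have := hchain.2 T path y h
    have hset : Hist Xs path T ∩ {ω | Xs (T + 1) ω = y}
        = {ω | (∀ s ≤ T, Xs s ω = path s) ∧ Xs (T + 1) ω = y} := rfl
    rw [hset]
    exact this

lemma hist_pow (hchain : IsMarkovChain μ P Xs) (x : X) :
    ∀ (n T : ℕ) (path : ℕ → X),
    (μ (Hist Xs path T ∩ {ω | Xs (T + n) ω = x})).toReal
      = (μ (Hist Xs path T)).toReal * (Matrix.of P ^ n) (path T) x := by
  intro n
  induction n with
  | zero =>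
    intro T path
    rw [pow_zero, Matrix.one_apply]
    simp only [Nat.add_zero]
    by_cases h : path T = x
    · have he : Hist Xs path T ∩ {ω | Xs T ω = x} = Hist Xs path T := by
        ext ω
        constructor
        · exact fun hh => hh.1
        · intro hh
          refine ⟨hh, ?_⟩
          show Xs T ω = x
          rw [hh T le_rfl, h]
      simp [he, h]
    · have he : Hist Xs path T ∩ {ω | Xs T ω = x} = ∅ := by
        ext ω
        simp only [Set.mem_inter_iff, Set.mem_setOf_eq, Set.mem_empty_iff_false, iff_false,
          not_and]
        intro hh hx
        exact h (by rw [← hh T le_rfl]; simpa using hx)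
      simp [he, h]
  | succ n ih =>
    intro T path
    set pth : X → ℕ → X := fun z => Function.update path (T + 1) z with hpth
    have claim1 : ∀ z, Hist Xs (pth z) (T + 1)
        = Hist Xs path T ∩ {ω | Xs (T + 1) ω = z} := by
      intro z
      ext ω
      constructor
      · intro h
        refine ⟨fun s hs => ?_, ?_⟩
        · have hne : s ≠ T + 1 := by omega
          have := h s (by omega)
          simpa [pth, Function.update_of_ne hne] using this
        · have := h (T + 1) le_rfl
          simpa [pth, Function.update_self] using this
      · rintro ⟨h1, h2⟩ s hs
        by_cases h' : s = T + 1
        · subst h'; simpa [pth, Function.update_self] using h2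
        · have hsT : s ≤ T := by omega
          simpa [pth, Function.update_of_ne h'] using h1 s hsT
    have claim2 : Hist Xs path T ∩ {ω | Xs (T + (n + 1)) ω = x}
        = ⋃ z, (Hist Xs (pth z) (T + 1) ∩ {ω | Xs (T + 1 + n) ω = x}) := by
      ext ω
      constructor
      · rintro ⟨h1, h2⟩
        refine Set.mem_iUnion.2 ⟨Xs (T + 1) ω, ?_⟩
        refine ⟨(claim1 _).symm ▸ ?_, ?_⟩
        · exact Set.mem_inter h1 rfl
        · show Xs (T + 1 + n) ω = x
          have : T + 1 + n = T + (n + 1) := by omega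
          rw [this]; exact h2
      · intro h
        obtain ⟨z, hz⟩ := Set.mem_iUnion.1 h
        rw [claim1] at hz
        refine ⟨hz.1.1, ?_⟩
        show Xs (T + (n + 1)) ω = x
        have : T + (n + 1) = T + 1 + n := by omega
        rw [this]; exact hz.2
    have hdisj : Pairwise (Function.onFun Disjoint
        fun z => Hist Xs (pth z) (T + 1) ∩ {ω | Xs (T + 1 + n) ω = x}) := by
      intro z w hzw
      refine Set.disjoint_left.2 fun ω hω hω' => hzw ?_
      have h1 : ω ∈ Hist Xs (pth z) (T + 1) := hω.1
      have h2 : ω ∈ Hist Xs (pth w) (T + 1) := hω'.1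
      rw [claim1] at h1 h2
      rw [← h1.2, ← h2.2]
    have hmeas : ∀ z, MeasurableSet
        (Hist Xs (pth z) (T + 1) ∩ {ω | Xs (T + 1 + n) ω = x}) := fun z =>
      (measurableSet_hist hchain.1 _ _).inter ((hchain.1 _) (measurableSet_singleton x))
    rw [claim2, measure_iUnion hdisj hmeas, tsum_fintype,
      ENNReal.toReal_sum (fun z _ => measure_ne_top μ _)]
    have hterm : ∀ z, (μ (Hist Xs (pth z) (T + 1) ∩ {ω | Xs (T + 1 + n) ω = x})).toReal
        = (μ (Hist Xs path T)).toReal * (P (path T) z * (Matrix.of P ^ n) z x) := by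
      intro z
      have h1 := ih (T + 1) (pth z)
      have h2 : pth z (T + 1) = z := Function.update_self _ _ _
      rw [h1, h2, claim1, hist_step hchain, mul_assoc]
    rw [Finset.sum_congr rfl fun z _ => hterm z, ← Finset.mul_sum]
    congr 1
    rw [pow_succ', Matrix.mul_apply]
    simp [Matrix.of_apply]

end Aux

section Aux2

variable {X : Type*} [Fintype X] [DecidableEq X]
    [MeasurableSpace X] [MeasurableSingletonClass X]
    {Ω : Type*} [MeasurableSpace Ω] {μ : Measure Ω} [IsProbabilityMeasure μ]
    {P : X → X → ℝ} {Xs : ℕ → Ω → X}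

lemma pow_stochastic {P : X → X → ℝ} (hP : IsStochastic P) (n : ℕ) :
    (∀ y z, 0 ≤ (Matrix.of P ^ n) y z) ∧ ∀ y, ∑ z, (Matrix.of P ^ n) y z = 1 := by
  induction n with
  | zero => simp [Matrix.one_apply]; intro y z; positivity
  | succ n ih =>
    constructor
    · intro y z
      rw [pow_succ, Matrix.mul_apply]
      exact Finset.sum_nonneg fun k _ => mul_nonneg (ih.1 y k) (by simpa using hP.1 k z)
    · intro y
      simp only [pow_succ, Matrix.mul_apply]
      rw [Finset.sum_comm]
      have : ∀ k, ∑ z, (Matrix.of P ^ n) y k * (Matrix.of P) k z = (Matrix.of P ^ n) y k := by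
        intro k
        rw [← Finset.mul_sum]
        have : ∑ z, (Matrix.of P) k z = 1 := by simpa using hP.2 k
        rw [this, mul_one]
      rw [Finset.sum_congr rfl fun k _ => this k, ih.2]

lemma pow_entry_le_one {P : X → X → ℝ} (hP : IsStochastic P) (n : ℕ) (y z : X) :
    (Matrix.of P ^ n) y z ≤ 1 := by
  have h := pow_stochastic hP n
  calc (Matrix.of P ^ n) y z ≤ ∑ w, (Matrix.of P ^ n) y w :=
        Finset.single_le_sum (fun w _ => h.1 y w) (Finset.mem_univ z)
    _ = 1 := h.2 y

/-- extend a finite path to `ℕ → X`. -/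
noncomputable def extPath [Nonempty X] (M : ℕ) (f : Fin (M + 1) → X) : ℕ → X :=
  fun s => if h : s < M + 1 then f ⟨s, h⟩ else Classical.arbitrary X

lemma partition_sum [Nonempty X] (hXs : ∀ t, Measurable (Xs t)) (M : ℕ) (S : Set Ω)
    (hS : MeasurableSet S) :
    (μ S).toReal = ∑ f : Fin (M + 1) → X, (μ (Hist Xs (extPath M f) M ∩ S)).toReal := by
  have hcover : S = ⋃ f : Fin (M + 1) → X, (Hist Xs (extPath M f) M ∩ S) := by
    ext ω
    constructor
    · intro hω
      refine Set.mem_iUnion.2 ⟨fun s => Xs s ω, ⟨?_, hω⟩⟩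
      intro s hs
      simp [extPath, Nat.lt_succ_of_le hs]
    · intro h
      obtain ⟨f, hf⟩ := Set.mem_iUnion.1 h
      exact hf.2
  have hdisj : Pairwise (Function.onFun Disjoint
      fun f : Fin (M + 1) → X => Hist Xs (extPath M f) M ∩ S) := by
    intro f g hfg
    refine Set.disjoint_left.2 fun ω hω hω' => hfg ?_
    funext s
    have h1 := hω.1 s (Nat.lt_succ_iff.1 s.2)
    have h2 := hω'.1 s (Nat.lt_succ_iff.1 s.2)
    have e1 : extPath M f s = f s := by simp [extPath, s.2]
    have e2 : extPath M g s = g s := by simp [extPath, s.2]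
    rw [e1] at h1; rw [e2] at h2
    rw [← h1, ← h2]
  have hmeas : ∀ f : Fin (M + 1) → X,
      MeasurableSet (Hist Xs (extPath M f) M ∩ S) := fun f =>
    (measurableSet_hist hXs _ _).inter hS
  conv_lhs => rw [hcover]
  rw [measure_iUnion hdisj hmeas, tsum_fintype,
    ENNReal.toReal_sum (fun f _ => measure_ne_top μ _)]

end Aux2

section Aux3

variable {X : Type*} [Fintype X] [DecidableEq X]
    [MeasurableSpace X] [MeasurableSingletonClass X]
    {Ω : Type*} [MeasurableSpace Ω] {μ : Measure Ω} [IsProbabilityMeasure μ]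
    {P : X → X → ℝ} {Xs : ℕ → Ω → X}

lemma measurableSet_avoid (hXs : ∀ t, Measurable (Xs t)) (x : X) (p : ℕ → Prop) :
    MeasurableSet {ω | ∀ t, p t → Xs t ω ≠ x} := by
  have h : {ω | ∀ t, p t → Xs t ω ≠ x} = ⋂ t, {ω | p t → Xs t ω ≠ x} := by
    ext ω; simp
  rw [h]
  refine MeasurableSet.iInter fun t => ?_
  by_cases hp : p t
  · have h2 : {ω | p t → Xs t ω ≠ x} = (Xs t) ⁻¹' {x}ᶜ := by ext ω; simp [hp]
    rw [h2]; exact (hXs t) (measurableSet_singleton x).compl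
  · have h2 : {ω | p t → Xs t ω ≠ x} = Set.univ := by ext ω; simp [hp]
    rw [h2]; exact MeasurableSet.univ

lemma window_bound (hchain : IsMarkovChain μ P Xs) {x : X}
    (nfun : X → ℕ) (hn1 : ∀ y, 1 ≤ nfun y) (N : ℕ) (hnN : ∀ y, nfun y ≤ N)
    (δ : ℝ) (hδ : ∀ y, δ ≤ (Matrix.of P ^ nfun y) y x) (T : ℕ) (path : ℕ → X) :
    (μ (Hist Xs path T ∩ {ω | ∀ t, T < t ∧ t ≤ T + N → Xs t ω ≠ x})).toReal
      ≤ (1 - δ) * (μ (Hist Xs path T)).toReal := by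
  set n := nfun (path T) with hn
  set H := Hist Xs path T with hH
  set E := H ∩ {ω | Xs (T + n) ω = x} with hE
  have hEH : E ⊆ H := Set.inter_subset_left
  have hEmeas : MeasurableSet E :=
    (measurableSet_hist hchain.1 _ _).inter ((hchain.1 _) (measurableSet_singleton x))
  have hsub : H ∩ {ω | ∀ t, T < t ∧ t ≤ T + N → Xs t ω ≠ x} ⊆ H \ E := by
    rintro ω ⟨hω1, hω2⟩
    refine ⟨hω1, fun hωE => ?_⟩
    exact hω2 (T + n) ⟨by have := hn1 (path T); omega,
      by have := hnN (path T); omega⟩ hωE.2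
  have hdiff : μ (H \ E) = μ H - μ E := by
    have : H \ E = H \ E := rfl
    exact measure_diff hEH hEmeas.nullMeasurableSet (measure_ne_top μ E)
  have hE' : (μ E).toReal = (μ H).toReal * (Matrix.of P ^ n) (path T) x :=
    hist_pow hchain x n T path
  have hge : δ * (μ H).toReal ≤ (μ E).toReal := by
    rw [hE']
    have := hδ (path T)
    nlinarith [ENNReal.toReal_nonneg (a := μ H)]
  calc (μ (H ∩ {ω | ∀ t, T < t ∧ t ≤ T + N → Xs t ω ≠ x})).toReal
      ≤ (μ (H \ E)).toReal :=
        ENNReal.toReal_mono (measure_ne_top μ _) (measure_mono hsub)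
    _ = (μ H).toReal - (μ E).toReal := by
        rw [hdiff, ENNReal.toReal_sub_of_le (measure_mono hEH) (measure_ne_top μ H)]
    _ ≤ (1 - δ) * (μ H).toReal := by nlinarith

lemma geo_bound [Nonempty X] (hchain : IsMarkovChain μ P Xs) {x : X}
    (nfun : X → ℕ) (hn1 : ∀ y, 1 ≤ nfun y) (N : ℕ) (hnN : ∀ y, nfun y ≤ N)
    (δ : ℝ) (hδ : ∀ y, δ ≤ (Matrix.of P ^ nfun y) y x) (hδ1 : δ ≤ 1) :
    ∀ (k T : ℕ),
      (μ {ω | ∀ t, T < t ∧ t ≤ T + k * N → Xs t ω ≠ x}).toReal ≤ (1 - δ) ^ k := by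
  intro k
  induction k with
  | zero =>
    intro T
    rw [pow_zero]
    calc (μ _).toReal ≤ (μ (Set.univ : Set Ω)).toReal :=
          ENNReal.toReal_mono (measure_ne_top μ _) (measure_mono (Set.subset_univ _))
      _ = 1 := by simp
  | succ k ih =>
    intro T
    set M := T + k * N with hM
    have hkn : T + (k + 1) * N = M + N := by rw [hM]; ring
    set A1 : Set Ω := {ω | ∀ t, T < t ∧ t ≤ T + (k + 1) * N → Xs t ω ≠ x} with hA1
    set A0 : Set Ω := {ω | ∀ t, T < t ∧ t ≤ T + k * N → Xs t ω ≠ x} with hA0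
    have hA1meas : MeasurableSet A1 := measurableSet_avoid hchain.1 x _
    have hA0meas : MeasurableSet A0 := measurableSet_avoid hchain.1 x _
    have key : ∀ f : Fin (M + 1) → X,
        (μ (Hist Xs (extPath M f) M ∩ A1)).toReal
          ≤ (1 - δ) * (μ (Hist Xs (extPath M f) M ∩ A0)).toReal := by
      intro f
      set H := Hist Xs (extPath M f) M with hH
      by_cases hf : ∀ t, T < t ∧ t ≤ M → extPath M f t ≠ x
      · have hHA : H ∩ A0 = H := by
          apply Set.inter_eq_left.2
          intro ω hω t ht
          rw [hω t ht.2]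
          exact hf t ht
        have hsub : H ∩ A1 ⊆ H ∩ {ω | ∀ t, M < t ∧ t ≤ M + N → Xs t ω ≠ x} := by
          rintro ω ⟨hω1, hω2⟩
          refine ⟨hω1, fun t ht => ?_⟩
          exact hω2 t ⟨by omega, by omega⟩
        calc (μ (H ∩ A1)).toReal
            ≤ (μ (H ∩ {ω | ∀ t, M < t ∧ t ≤ M + N → Xs t ω ≠ x})).toReal :=
              ENNReal.toReal_mono (measure_ne_top μ _) (measure_mono hsub)
          _ ≤ (1 - δ) * (μ H).toReal :=
              window_bound hchain nfun hn1 N hnN δ hδ M (extPath M f)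
          _ = (1 - δ) * (μ (H ∩ A0)).toReal := by rw [hHA]
      · push_neg at hf
        obtain ⟨t, ht, htx⟩ := hf
        have hempty : H ∩ A0 = ∅ := by
          ext ω
          simp only [Set.mem_inter_iff, Set.mem_empty_iff_false, iff_false, not_and]
          intro hω1 hω2
          exact hω2 t ht (by rw [hω1 t ht.2]; exact htx)
        have hsub : H ∩ A1 ⊆ H ∩ A0 := by
          refine Set.inter_subset_inter_right _ fun ω hω t' ht' => ?_
          exact hω t' ⟨ht'.1, by omega⟩
        have h0 : μ (H ∩ A1) = 0 :=
          measure_mono_null (hempty ▸ hsub) (measure_empty (μ := μ))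
        rw [h0, hempty]
        simp
    calc (μ A1).toReal
        = ∑ f : Fin (M + 1) → X, (μ (Hist Xs (extPath M f) M ∩ A1)).toReal :=
          partition_sum hchain.1 M A1 hA1meas
      _ ≤ ∑ f : Fin (M + 1) → X, (1 - δ) * (μ (Hist Xs (extPath M f) M ∩ A0)).toReal :=
          Finset.sum_le_sum fun f _ => key f
      _ = (1 - δ) * (μ A0).toReal := by
          rw [← Finset.mul_sum, ← partition_sum hchain.1 M A0 hA0meas]
      _ ≤ (1 - δ) * (1 - δ) ^ k := by
          have := ih T
          nlinarith
      _ = (1 - δ) ^ (k + 1) := by ring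

end Aux3

/-- **An irreducible Markov chain on a finite state space visits every state.**
If `P` is an irreducible stochastic matrix on a finite nonempty type `X` and `Xs` is a
Markov chain with transition matrix `P` and arbitrary initial distribution, then for every
state `x`, almost surely the set of times `t` with `X_t = x` is nonempty — in fact infinite. -/
theorem irreducible_chain_visits_every_state
    {X : Type*} [Fintype X] [Nonempty X] [DecidableEq X]
    [MeasurableSpace X] [MeasurableSingletonClass X]
    (P : X → X → ℝ) (hP : IsStochastic P) (hirr : IsIrreducibleMC P)
    {Ω : Type*} [MeasurableSpace Ω] (μ : Measure Ω) [IsProbabilityMeasure μ]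
    (Xs : ℕ → Ω → X) (hchain : IsMarkovChain μ P Xs) (x : X) :
    ∀ᵐ ω ∂μ, {t : ℕ | Xs t ω = x}.Nonempty ∧ {t : ℕ | Xs t ω = x}.Infinite := by
  -- choose hitting times and a uniform bound
  choose nfun hn1 hnpos using fun y => hirr y x
  set N := Finset.univ.sup nfun with hN
  have hnN : ∀ y, nfun y ≤ N := fun y => Finset.le_sup (Finset.mem_univ y)
  set δ := Finset.univ.inf' Finset.univ_nonempty
      (fun y => (Matrix.of P ^ nfun y) y x) with hδdef
  have hδpos : 0 < δ := by
    rw [hδdef, Finset.lt_inf'_iff]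
    exact fun y _ => hnpos y
  have hδle : ∀ y, δ ≤ (Matrix.of P ^ nfun y) y x := fun y =>
    Finset.inf'_le _ (Finset.mem_univ y)
  have hδ1 : δ ≤ 1 := by
    obtain ⟨y⟩ := (inferInstance : Nonempty X)
    exact (hδle y).trans (pow_entry_le_one hP (nfun y) y x)
  -- no visits after time T is a null event
  have hB : ∀ T : ℕ, μ {ω | ∀ t, T < t → Xs t ω ≠ x} = 0 := by
    intro T
    set c := (μ {ω | ∀ t, T < t → Xs t ω ≠ x}).toReal with hc
    have hck : ∀ k : ℕ, c ≤ (1 - δ) ^ k := by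
      intro k
      refine le_trans ?_ (geo_bound hchain nfun hn1 N hnN δ hδle hδ1 k T)
      refine ENNReal.toReal_mono (measure_ne_top μ _) (measure_mono ?_)
      intro ω hω t ht
      exact hω t ht.1
    have htend : Tendsto (fun k : ℕ => (1 - δ) ^ k) atTop (nhds 0) :=
      tendsto_pow_atTop_nhds_zero_of_lt_one (by linarith) (by linarith)
    have hle0 : c ≤ 0 := ge_of_tendsto' htend hck
    have hc0 : c = 0 := le_antisymm hle0 ENNReal.toReal_nonneg
    rcases ENNReal.toReal_eq_zero_iff _ |>.1 hc0 with h | h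
    · exact h
    · exact absurd h (measure_ne_top μ _)
  -- conclude
  rw [MeasureTheory.ae_iff]
  refine measure_mono_null (fun ω hω => ?_) (measure_iUnion_null hB)
  simp only [Set.mem_setOf_eq, not_and] at hω
  have hfin : {t : ℕ | Xs t ω = x}.Finite := by
    by_contra hinf
    have h1 : {t : ℕ | Xs t ω = x}.Infinite := hinf
    exact hω h1.nonempty h1
  obtain ⟨T, hT⟩ := hfin.bddAbove
  refine Set.mem_iUnion.2 ⟨T, fun t ht htx => ?_⟩
  have : t ≤ T := hT htx
  omega
end

section
/- An irreducible stochastic matrix P on a finite nonempty type X possesses exactly one stationary probability vector π, and this stationary vector has full support: π x > 0 for every x ∈ X. -/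
/-- A stationary probability vector for `P`: nonnegative, summing to one, and invariant. -/
def IsStationaryProbVector {X : Type*} [Fintype X] (P : X → X → ℝ) (π : X → ℝ) : Prop :=
  (∀ x, 0 ≤ π x) ∧ (∑ x, π x = 1) ∧ ∀ y, π y = ∑ x, π x * P x y

section Aux
open Matrix

variable {X : Type*} [Fintype X] [DecidableEq X] (P : X → X → ℝ)

lemma stoch_pow_nonneg (hP : IsStochastic P) (n : ℕ) :
    ∀ x y, 0 ≤ (Matrix.of P ^ n) x y := by
  induction n with
  | zero =>
    intro x y
    rw [pow_zero]
    by_cases h : x = y <;> simp [Matrix.one_apply, h]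
  | succ n ih =>
    intro x y
    rw [pow_succ, Matrix.mul_apply]
    exact Finset.sum_nonneg fun z _ => mul_nonneg (ih x z) (hP.1 z y)

lemma fixed_pow (v : X → ℝ) (hv : ∀ y, v y = ∑ x, v x * P x y) (n : ℕ) :
    ∀ y, v y = ∑ x, v x * (Matrix.of P ^ n) x y := by
  induction n with
  | zero =>
    intro y
    simp [Matrix.one_apply]
  | succ n ih =>
    intro y
    calc v y = ∑ z, v z * P z y := hv y
    _ = ∑ z, (∑ x, v x * (Matrix.of P ^ n) x z) * P z y := by
        refine Finset.sum_congr rfl fun z _ => ?_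
        rw [← ih z]
    _ = ∑ z, ∑ x, v x * (Matrix.of P ^ n) x z * P z y := by
        refine Finset.sum_congr rfl fun z _ => ?_
        rw [Finset.sum_mul]
    _ = ∑ x, ∑ z, v x * ((Matrix.of P ^ n) x z * P z y) := by
        rw [Finset.sum_comm]
        exact Finset.sum_congr rfl fun x _ => Finset.sum_congr rfl fun z _ => by ring
    _ = ∑ x, v x * (Matrix.of P ^ (n + 1)) x y := by
        refine Finset.sum_congr rfl fun x _ => ?_
        rw [← Finset.mul_sum, pow_succ, Matrix.mul_apply]
        rfl

/-- A nonnegative fixed vector with a positive entry is everywhere positive. -/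
lemma fixed_full_support (hP : IsStochastic P) (hirr : IsIrreducibleMC P)
    (v : X → ℝ) (hv0 : ∀ x, 0 ≤ v x) (hv : ∀ y, v y = ∑ x, v x * P x y)
    {x0 : X} (hx0 : 0 < v x0) : ∀ y, 0 < v y := by
  intro y
  obtain ⟨n, -, hn⟩ := hirr x0 y
  rw [fixed_pow P v hv n y]
  have hle : v x0 * (Matrix.of P ^ n) x0 y ≤ ∑ x, v x * (Matrix.of P ^ n) x y :=
    Finset.single_le_sum
      (fun x _ => mul_nonneg (hv0 x) (stoch_pow_nonneg P hP n x y)) (Finset.mem_univ x0)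
  exact lt_of_lt_of_le (mul_pos hx0 hn) hle

/-- The absolute value of a fixed vector is fixed. -/
lemma abs_fixed (hP : IsStochastic P) (v : X → ℝ) (hv : ∀ y, v y = ∑ x, v x * P x y) :
    ∀ y, |v y| = ∑ x, |v x| * P x y := by
  have hle : ∀ y ∈ Finset.univ, |v y| ≤ ∑ x, |v x| * P x y := by
    intro y _
    rw [hv y]
    calc |∑ x, v x * P x y| ≤ ∑ x, |v x * P x y| := Finset.abs_sum_le_sum_abs _ _
    _ = ∑ x, |v x| * P x y := Finset.sum_congr rfl fun x _ => by
        rw [abs_mul, abs_of_nonneg (hP.1 x y)]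
  have hsum : ∑ y, |v y| = ∑ y, ∑ x, |v x| * P x y := by
    rw [Finset.sum_comm]
    refine (Finset.sum_congr rfl fun x _ => ?_).symm
    rw [← Finset.mul_sum, hP.2 x, mul_one]
  intro y
  exact (Finset.sum_eq_sum_iff_of_le hle).mp hsum y (Finset.mem_univ y)

/-- There exists a nonzero left fixed vector of a stochastic matrix. -/
lemma exists_nonzero_fixed (hP : IsStochastic P) [Nonempty X] :
    ∃ v : X → ℝ, v ≠ 0 ∧ ∀ y, v y = ∑ x, v x * P x y := by
  set M : Matrix X X ℝ := (Matrix.of P)ᵀ - 1 with hM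
  have hker : ((Matrix.of P) - 1) *ᵥ (fun _ => (1 : ℝ)) = 0 := by
    funext x
    simp only [Matrix.sub_mulVec, Matrix.mulVec, dotProduct, Pi.sub_apply]
    simp [Matrix.one_apply, hP.2 x]
  have hdetT : ((Matrix.of P) - 1).det = 0 := by
    refine Matrix.exists_mulVec_eq_zero_iff.mp ?_
    exact ⟨fun _ => (1 : ℝ),
      fun h0 => by simpa using congrFun h0 (Classical.arbitrary X), hker⟩
  have hdet : M.det = 0 := by
    have : M = ((Matrix.of P) - 1)ᵀ := by
      rw [Matrix.transpose_sub, Matrix.transpose_one]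
    rw [this, Matrix.det_transpose]
    exact hdetT
  obtain ⟨v, hv0, hv⟩ := Matrix.exists_mulVec_eq_zero_iff.mpr hdet
  refine ⟨v, hv0, fun y => ?_⟩
  have := congrFun hv y
  simp only [hM, Matrix.sub_mulVec, Matrix.mulVec, dotProduct, Pi.sub_apply,
    Pi.zero_apply, Matrix.transpose_apply, Matrix.of_apply, Matrix.sub_apply, sub_mul,
    Finset.sum_sub_distrib] at this
  have h1 : ∑ x, (1 : Matrix X X ℝ) y x * v x = v y := by
    simp [Matrix.one_apply]
  rw [h1] at this
  have := sub_eq_zero.mp this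
  rw [← this]
  exact Finset.sum_congr rfl fun x _ => mul_comm _ _

end Aux

/-- **Existence, uniqueness and full support of the stationary distribution.**
An irreducible stochastic matrix `P` on a finite nonempty type possesses exactly one
stationary probability vector `π`, and this stationary vector has full support:
`π x > 0` for every `x`. -/
theorem irreducible_unique_stationary_full_support
    {X : Type*} [Fintype X] [Nonempty X] [DecidableEq X]
    (P : X → X → ℝ) (hP : IsStochastic P) (hirr : IsIrreducibleMC P) :
    ∃ π : X → ℝ, IsStationaryProbVector P π ∧
      (∀ π' : X → ℝ, IsStationaryProbVector P π' → π' = π) ∧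
      ∀ x, 0 < π x := by
  obtain ⟨v, hvne, hv⟩ := exists_nonzero_fixed P hP
  set w : X → ℝ := fun x => |v x| with hw
  have hwfix : ∀ y, w y = ∑ x, w x * P x y := abs_fixed P hP v hv
  have hwnn : ∀ x, 0 ≤ w x := fun x => abs_nonneg _
  obtain ⟨x0, hx0⟩ : ∃ x, v x ≠ 0 := by
    by_contra h
    push_neg at h
    exact hvne (funext h)
  have hwx0 : 0 < w x0 := abs_pos.mpr hx0
  have hs : 0 < ∑ x, w x :=
    Finset.sum_pos' (fun x _ => hwnn x) ⟨x0, Finset.mem_univ x0, hwx0⟩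
  set s := ∑ x, w x with hs'
  refine ⟨fun x => w x / s, ⟨fun x => div_nonneg (hwnn x) hs.le, ?_, fun y => ?_⟩, ?_, ?_⟩
  · rw [← Finset.sum_div, ← hs', div_self hs.ne']
  · show w y / s = ∑ x, w x / s * P x y
    rw [hwfix y, Finset.sum_div]
    exact Finset.sum_congr rfl fun x _ => by ring
  · -- uniqueness
    intro π' hπ'
    have hπfix : ∀ y, w y / s = ∑ x, (w x / s) * P x y := by
      intro y
      rw [hwfix y, Finset.sum_div]
      exact Finset.sum_congr rfl fun x _ => by ring
    have hπsum : ∑ x, w x / s = 1 := by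
      rw [← Finset.sum_div, ← hs', div_self hs.ne']
    by_contra hne
    set d : X → ℝ := fun x => π' x - w x / s with hd
    have hdfix : ∀ y, d y = ∑ x, d x * P x y := by
      intro y
      simp only [hd]
      rw [hπ'.2.2 y, hπfix y, ← Finset.sum_sub_distrib]
      exact Finset.sum_congr rfl fun x _ => by ring
    have hdsum : ∑ x, d x = 0 := by
      simp only [hd]
      rw [Finset.sum_sub_distrib, hπ'.2.1, hπsum, sub_self]
    obtain ⟨xne, hxne⟩ : ∃ x, d x ≠ 0 := by
      by_contra h
      push_neg at h
      exact hne (funext fun x => by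
        have := h x
        simp only [hd] at this
        linarith [sub_eq_zero.mp this])
    have hpos : ∃ z, 0 < d z := by
      by_contra h
      push_neg at h
      have h0 : ∀ x ∈ Finset.univ, -d x = 0 := by
        refine Finset.sum_eq_zero_iff_of_nonneg (fun x _ => neg_nonneg.mpr (h x)) |>.mp ?_
        simp [hdsum]
      exact hxne (by have := h0 xne (Finset.mem_univ xne); linarith)
    have hneg : ∃ z, d z < 0 := by
      by_contra h
      push_neg at h
      have h0 : ∀ x ∈ Finset.univ, d x = 0 :=
        (Finset.sum_eq_zero_iff_of_nonneg (fun x _ => h x)).mp hdsum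
      exact hxne (h0 xne (Finset.mem_univ xne))
    obtain ⟨z, hz⟩ := hpos
    obtain ⟨y, hy⟩ := hneg
    set u : X → ℝ := fun x => |d x| + d x with hu
    have hufix : ∀ t, u t = ∑ x, u x * P x t := by
      intro t
      simp only [hu]
      rw [abs_fixed P hP d hdfix t, hdfix t, ← Finset.sum_add_distrib]
      exact Finset.sum_congr rfl fun x _ => by ring
    have hunn : ∀ x, 0 ≤ u x := fun x => by
      simp only [hu]
      have := abs_nonneg (d x)
      have := neg_abs_le (d x)
      linarith
    have huz : 0 < u z := by
      simp only [hu]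
      rw [abs_of_pos hz]
      linarith
    have := fixed_full_support P hP hirr u hunn hufix huz y
    simp only [hu] at this
    rw [abs_of_neg hy] at this
    linarith
  · intro x
    exact fixed_full_support P hP hirr _ (fun x => div_nonneg (hwnn x) hs.le)
      (fun y => by rw [hwfix y, Finset.sum_div]; exact Finset.sum_congr rfl fun x _ => by ring)
      (div_pos hwx0 hs) x
end

section
/- Invariance of the RGMJMCMC swap move (Theorem 2): Let M and S be finite nonempty types, let π be a probability mass function on M, and let q_S : M → PMF S, q_o : S × M → PMF M, and q_r : S × M → PMF M be proposal kernels. Generate the tuple (m, S', m'_k, m', S, m_k) with joint probability π(m) · q_S(m)(S') · q_o(S', m)(m'_k) · q_r(S', m'_k)(m') · q_S(m')(S) · q_o(S, m')(m_k), and set m* = m' with probability min{1, a_mh} and m* = m otherwise, where a_mh = (π(m') · q_r(S, m_k)(m)) / (π(m) · q_r(S', m'_k)(m')), with the convention that the proposal is rejected (m* = m) whenever the denominator is zero; note the denominator is positive on every outcome of positive joint probability. Then the marginal law of m* is π: for every m₀ ∈ M, the total probability that m* = m₀ equals π(m₀). -/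
/-!
The swap move is a Metropolis–Hastings step from the extended state `x = (m, s', mk')` to
`y = (m', s, mk)`. Its joint weight factors as `c x y * d x y`, where
`c x y = qS m s' * qo s' m mk' * (qS m' s * qo s m' mk)` is symmetric under `x ↔ y` and
`d x y = π m * qr s' mk' m'`, and the acceptance ratio is `d y x / d x y`. So the accepted
mass `c x y * min (d x y) (d y x)` is symmetric: the flow of accepted moves into `m₀` equals the
flow out of it, and the law of `m*` is the law of `m`, which is `π` because the proposal
kernels are stochastic.
-/

open Finset

noncomputable def mhAcceptance (num den : ℝ) : ℝ :=
  if den = 0 then 0 else min 1 (num / den)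

lemma mul_mhAcceptance {num den : ℝ} (hnum : 0 ≤ num) (hden : 0 ≤ den) :
    den * mhAcceptance num den = min den num := by
  unfold mhAcceptance
  split_ifs with h
  · simp [h, hnum]
  · rw [mul_min_of_nonneg _ _ hden, mul_one, mul_div_cancel₀ _ h]

lemma sum_sum_mul_mhStep_eq {X : Type*} [Fintype X] (c d : X → X → ℝ)
    (hc : ∀ x y, c x y = c y x) (hd : ∀ x y, 0 ≤ d x y) (φ : X → ℝ) :
    ∑ x, ∑ y, c x y * d x y *
        (mhAcceptance (d y x) (d x y) * φ y + (1 - mhAcceptance (d y x) (d x y)) * φ x)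
      = ∑ x, ∑ y, c x y * d x y * φ x := by
  set g : X → X → ℝ := fun x y => c x y * min (d x y) (d y x)
  have hg : ∀ x y, c x y * d x y * mhAcceptance (d y x) (d x y) = g x y := fun x y => by
    rw [mul_assoc, mul_mhAcceptance (hd y x) (hd x y)]
  have hflow : ∑ x, ∑ y, g x y * φ y = ∑ x, ∑ y, g x y * φ x := by
    rw [sum_comm]
    simp only [g, hc, min_comm]
  calc _ = ∑ x, ∑ y, (g x y * φ y - g x y * φ x + c x y * d x y * φ x) := by
        refine sum_congr rfl fun x _ => sum_congr rfl fun y _ => ?_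
        rw [← hg]
        ring
    _ = _ := by simp only [sum_add_distrib, sum_sub_distrib, hflow, sub_self, zero_add]

theorem rgmjmcmc_invariance_general
    {M S : Type*} [Fintype M] [DecidableEq M] [Fintype S]
    (π : M → ℝ) (hπ0 : ∀ m, 0 ≤ π m)
    (qS : M → S → ℝ) (hqS1 : ∀ m, ∑ s, qS m s = 1)
    (qo : S → M → M → ℝ) (hqo1 : ∀ s m, ∑ m', qo s m m' = 1)
    (qr : S → M → M → ℝ) (hqr0 : ∀ s m m', 0 ≤ qr s m m') (hqr1 : ∀ s m, ∑ m', qr s m m' = 1)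
    (m₀ : M) :
    (∑ m : M, ∑ s' : S, ∑ mk' : M, ∑ m' : M, ∑ s : S, ∑ mk : M,
      (π m * qS m s' * qo s' m mk' * qr s' mk' m' * qS m' s * qo s m' mk) *
        ((if π m * qr s' mk' m' = 0 then 0
            else min 1 ((π m' * qr s mk m) / (π m * qr s' mk' m'))) *
              (if m' = m₀ then 1 else 0) +
         (1 - (if π m * qr s' mk' m' = 0 then 0
            else min 1 ((π m' * qr s mk m) / (π m * qr s' mk' m')))) *
              (if m = m₀ then 1 else 0)))
      = π m₀ := by
  let c : M × S × M → M × S × M → ℝ := fun x y =>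
    qS x.1 x.2.1 * qo x.2.1 x.1 x.2.2 * (qS y.1 y.2.1 * qo y.2.1 y.1 y.2.2)
  let d : M × S × M → M × S × M → ℝ := fun x y => π x.1 * qr x.2.1 x.2.2 y.1
  let φ : M × S × M → ℝ := fun x => if x.1 = m₀ then 1 else 0
  have hbalance := sum_sum_mul_mhStep_eq c d (fun _ _ => mul_comm _ _)
    (fun _ _ => mul_nonneg (hπ0 _) (hqr0 _ _ _)) φ
  have hmarginal : ∑ x, ∑ y, c x y * d x y * φ x = π m₀ := by
    simp only [Fintype.sum_prod_type, c, d, φ]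
    rw [sum_eq_single m₀ (fun m _ hm => by simp [hm]) (by simp)]
    simp only [if_true, mul_one, mul_comm _ (π m₀ * _), mul_assoc, ← mul_sum, hqo1, hqS1,
      ← sum_mul, hqr1, one_mul]
  rw [hmarginal] at hbalance
  simp only [Fintype.sum_prod_type, c, d, φ, mhAcceptance] at hbalance
  convert hbalance using 7
  ring

/-- **Invariance of the RGMJMCMC swap move (Theorem 2).**
Let `π` be a probability mass function on a finite nonempty type `M` of models, and let
`qS`, `qo`, `qr` be proposal kernels (row-wise probability mass functions) over a finite
nonempty type `S` of populations.  Generate the tuple `(m, s', mk', m', s, mk)` with joint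
probability `π m · qS m s' · qo s' m mk' · qr s' mk' m' · qS m' s · qo s m' mk`, and set
`m* = m'` with probability `min {1, a_mh}` (and `m* = m` otherwise), where
`a_mh = (π m' · qr s mk m) / (π m · qr s' mk' m')`, the proposal being rejected whenever
the denominator vanishes.  Then the marginal law of `m*` is `π`: for every model `m₀`,
the total probability that `m* = m₀` equals `π m₀`. -/
theorem rgmjmcmc_invariance
    {M S : Type*} [Fintype M] [Nonempty M] [DecidableEq M] [Fintype S] [Nonempty S]
    (π : M → ℝ) (hπ0 : ∀ m, 0 ≤ π m) (hπ1 : ∑ m, π m = 1)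
    (qS : M → S → ℝ) (hqS0 : ∀ m s, 0 ≤ qS m s) (hqS1 : ∀ m, ∑ s, qS m s = 1)
    (qo : S → M → M → ℝ) (hqo0 : ∀ s m m', 0 ≤ qo s m m') (hqo1 : ∀ s m, ∑ m', qo s m m' = 1)
    (qr : S → M → M → ℝ) (hqr0 : ∀ s m m', 0 ≤ qr s m m') (hqr1 : ∀ s m, ∑ m', qr s m m' = 1)
    (m₀ : M) :
    (∑ m : M, ∑ s' : S, ∑ mk' : M, ∑ m' : M, ∑ s : S, ∑ mk : M,
      (π m * qS m s' * qo s' m mk' * qr s' mk' m' * qS m' s * qo s m' mk) *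
        ((if π m * qr s' mk' m' = 0 then 0
            else min 1 ((π m' * qr s mk m) / (π m * qr s' mk' m'))) *
              (if m' = m₀ then 1 else 0) +
         (1 - (if π m * qr s' mk' m' = 0 then 0
            else min 1 ((π m' * qr s mk m) / (π m * qr s' mk' m')))) *
              (if m = m₀ then 1 else 0)))
      = π m₀ :=
  rgmjmcmc_invariance_general π hπ0 qS hqS1 qo hqo1 qr hqr0 hqr1 m₀
end

section
/- Delayed acceptance for RGMJMCMC (Theorem 3): Let M and S be finite nonempty types, π a probability mass function on M, and q_S : M → PMF S, q_o : S × M → PMF M, q_r : S × M → PMF M proposal kernels. Generate (m, S', m'_k, m', S, m_k) with joint probability π(m) · q_S(m)(S') · q_o(S', m)(m'_k) · q_r(S', m'_k)(m') · q_S(m')(S) · q_o(S, m')(m_k). Set m* = m' if and only if the proposal is accepted in both of two independent stages: stage one accepts with probability min{1, π(m')/π(m)}, and stage two accepts with probability min{1, q_r(S, m_k)(m) / q_r(S', m'_k)(m')} (rejecting whenever a denominator is zero); otherwise set m* = m. Then the marginal law of m* is π: for every m₀ ∈ M the total probability that m* = m₀ equals π(m₀). -/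
private lemma key_min (a b : ℝ) (ha : 0 ≤ a) (hb : 0 ≤ b) :
    a * (if a = 0 then 0 else min 1 (b / a)) = min a b := by
  rcases eq_or_lt_of_le ha with h | h
  · simp [← h, min_eq_left hb]
  · rw [if_neg h.ne', mul_min_of_nonneg _ _ h.le, mul_one, mul_div_cancel₀ _ h.ne']

private lemma swap6 {M S : Type*} [Fintype M] [Fintype S] (F : M → S → M → M → S → M → ℝ) :
    (∑ m : M, ∑ s' : S, ∑ mk' : M, ∑ m' : M, ∑ s : S, ∑ mk : M, F m s' mk' m' s mk)
  = ∑ m : M, ∑ s' : S, ∑ mk' : M, ∑ m' : M, ∑ s : S, ∑ mk : M, F m' s mk m s' mk' := by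
  have h1 : (∑ m : M, ∑ s' : S, ∑ mk' : M, ∑ m' : M, ∑ s : S, ∑ mk : M, F m s' mk' m' s mk)
      = ∑ x : M × S × M × M × S × M, F x.1 x.2.1 x.2.2.1 x.2.2.2.1 x.2.2.2.2.1 x.2.2.2.2.2 := by
    simp [Fintype.sum_prod_type]
  have h2 : (∑ m : M, ∑ s' : S, ∑ mk' : M, ∑ m' : M, ∑ s : S, ∑ mk : M, F m' s mk m s' mk')
      = ∑ x : M × S × M × M × S × M, F x.2.2.2.1 x.2.2.2.2.1 x.2.2.2.2.2 x.1 x.2.1 x.2.2.1 := by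
    simp [Fintype.sum_prod_type]
  rw [h1, h2]
  exact Fintype.sum_equiv
    ⟨fun x => (x.2.2.2.1, x.2.2.2.2.1, x.2.2.2.2.2, x.1, x.2.1, x.2.2.1),
     fun x => (x.2.2.2.1, x.2.2.2.2.1, x.2.2.2.2.2, x.1, x.2.1, x.2.2.1),
     fun x => rfl, fun x => rfl⟩ _ _ (fun x => rfl)

/-- **Delayed acceptance for RGMJMCMC (Theorem 3).**
Let `π` be a probability mass function on a finite nonempty type `M` of models, and let
`qS`, `qo`, `qr` be proposal kernels (row-wise probability mass functions) over a finite
nonempty type `S` of populations.  Generate the tuple `(m, s', mk', m', s, mk)` with joint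
probability `π m · qS m s' · qo s' m mk' · qr s' mk' m' · qS m' s · qo s m' mk`.
Set `m* = m'` iff the proposal is accepted in both of two independent stages: stage one
accepts with probability `min {1, π m' / π m}` and stage two with probability
`min {1, qr s mk m / qr s' mk' m'}` (rejecting whenever a denominator vanishes); otherwise
`m* = m`.  Then the marginal law of `m*` is `π`: for every model `m₀`, the total
probability that `m* = m₀` equals `π m₀`. -/
theorem rgmjmcmc_delayed_acceptance
    {M S : Type*} [Fintype M] [Nonempty M] [DecidableEq M] [Fintype S] [Nonempty S]
    (π : M → ℝ) (hπ0 : ∀ m, 0 ≤ π m) (hπ1 : ∑ m, π m = 1)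
    (qS : M → S → ℝ) (hqS0 : ∀ m s, 0 ≤ qS m s) (hqS1 : ∀ m, ∑ s, qS m s = 1)
    (qo : S → M → M → ℝ) (hqo0 : ∀ s m m', 0 ≤ qo s m m') (hqo1 : ∀ s m, ∑ m', qo s m m' = 1)
    (qr : S → M → M → ℝ) (hqr0 : ∀ s m m', 0 ≤ qr s m m') (hqr1 : ∀ s m, ∑ m', qr s m m' = 1)
    (m₀ : M) :
    (∑ m : M, ∑ s' : S, ∑ mk' : M, ∑ m' : M, ∑ s : S, ∑ mk : M,
      (π m * qS m s' * qo s' m mk' * qr s' mk' m' * qS m' s * qo s m' mk) *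
        (((if π m = 0 then 0 else min 1 (π m' / π m)) *
          (if qr s' mk' m' = 0 then 0 else min 1 (qr s mk m / qr s' mk' m'))) *
            (if m' = m₀ then 1 else 0) +
         (1 - (if π m = 0 then 0 else min 1 (π m' / π m)) *
          (if qr s' mk' m' = 0 then 0 else min 1 (qr s mk m / qr s' mk' m'))) *
            (if m = m₀ then 1 else 0)))
      = π m₀ := by
  -- `G` is the symmetric "flow" term, `p` the joint proposal density.
  set G : M → S → M → M → S → M → ℝ := fun m s' mk' m' s mk =>
    min (π m) (π m') * min (qr s' mk' m') (qr s mk m) *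
      (qS m s' * qo s' m mk' * qS m' s * qo s m' mk) with hG
  calc
    (∑ m : M, ∑ s' : S, ∑ mk' : M, ∑ m' : M, ∑ s : S, ∑ mk : M,
      (π m * qS m s' * qo s' m mk' * qr s' mk' m' * qS m' s * qo s m' mk) *
        (((if π m = 0 then 0 else min 1 (π m' / π m)) *
          (if qr s' mk' m' = 0 then 0 else min 1 (qr s mk m / qr s' mk' m'))) *
            (if m' = m₀ then 1 else 0) +
         (1 - (if π m = 0 then 0 else min 1 (π m' / π m)) *
          (if qr s' mk' m' = 0 then 0 else min 1 (qr s mk m / qr s' mk' m'))) *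
            (if m = m₀ then 1 else 0)))
      = ∑ m : M, ∑ s' : S, ∑ mk' : M, ∑ m' : M, ∑ s : S, ∑ mk : M,
          (G m s' mk' m' s mk * (if m' = m₀ then 1 else 0)
           - G m s' mk' m' s mk * (if m = m₀ then 1 else 0)
           + π m * (if m = m₀ then 1 else 0) *
              (qS m s' * (qo s' m mk' * (qr s' mk' m' * (qS m' s * qo s m' mk))))) := by
        refine Finset.sum_congr rfl fun m _ => Finset.sum_congr rfl fun s' _ =>
          Finset.sum_congr rfl fun mk' _ => Finset.sum_congr rfl fun m' _ =>
          Finset.sum_congr rfl fun s _ => Finset.sum_congr rfl fun mk _ => ?_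
        rw [hG]
        simp only
        rw [← key_min (π m) (π m') (hπ0 m) (hπ0 m'),
            ← key_min (qr s' mk' m') (qr s mk m) (hqr0 s' mk' m') (hqr0 s mk m)]
        ring
    _ = (∑ m : M, ∑ s' : S, ∑ mk' : M, ∑ m' : M, ∑ s : S, ∑ mk : M,
            G m s' mk' m' s mk * (if m' = m₀ then 1 else 0))
        - (∑ m : M, ∑ s' : S, ∑ mk' : M, ∑ m' : M, ∑ s : S, ∑ mk : M,
            G m s' mk' m' s mk * (if m = m₀ then 1 else 0))
        + (∑ m : M, ∑ s' : S, ∑ mk' : M, ∑ m' : M, ∑ s : S, ∑ mk : M,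
            π m * (if m = m₀ then 1 else 0) *
              (qS m s' * (qo s' m mk' * (qr s' mk' m' * (qS m' s * qo s m' mk))))) := by
        simp only [Finset.sum_add_distrib, Finset.sum_sub_distrib]
    _ = ∑ m : M, ∑ s' : S, ∑ mk' : M, ∑ m' : M, ∑ s : S, ∑ mk : M,
            π m * (if m = m₀ then 1 else 0) *
              (qS m s' * (qo s' m mk' * (qr s' mk' m' * (qS m' s * qo s m' mk)))) := by
        have hsym : (∑ m : M, ∑ s' : S, ∑ mk' : M, ∑ m' : M, ∑ s : S, ∑ mk : M,
            G m s' mk' m' s mk * (if m' = m₀ then 1 else 0))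
          = ∑ m : M, ∑ s' : S, ∑ mk' : M, ∑ m' : M, ∑ s : S, ∑ mk : M,
            G m s' mk' m' s mk * (if m = m₀ then 1 else 0) := by
          rw [swap6 (fun m s' mk' m' s mk => G m s' mk' m' s mk * (if m' = m₀ then 1 else 0))]
          refine Finset.sum_congr rfl fun m _ => Finset.sum_congr rfl fun s' _ =>
            Finset.sum_congr rfl fun mk' _ => Finset.sum_congr rfl fun m' _ =>
            Finset.sum_congr rfl fun s _ => Finset.sum_congr rfl fun mk _ => ?_
          rw [hG]
          simp only
          rw [min_comm (π m') (π m), min_comm (qr s mk m) (qr s' mk' m')]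
          ring
        rw [hsym, sub_self, zero_add]
    _ = π m₀ := by
        simp only [← Finset.mul_sum, hqo1, hqS1, hqr1, mul_one]
        simp [mul_ite]
end

section
/- Detailed balance for factorized (delayed) acceptance: Let X be a finite nonempty type, π a probability mass function on X with π x > 0 for all x, and q : X → PMF X a proposal kernel such that for x ≠ y, q(x)(y) > 0 if and only if q(y)(x) > 0. Let a_1, …, a_k : X × X → ℝ be functions such that for all x ≠ y with q(x)(y) > 0: (i) a_j(x, y) > 0 and a_j(x, y) · a_j(y, x) = 1 for each j = 1, …, k, and (ii) ∏_{j=1}^{k} a_j(x, y) = (π(y) · q(y)(x)) / (π(x) · q(x)(y)). Define the transition kernel K by K(x)(y) = q(x)(y) · ∏_{j=1}^{k} min{1, a_j(x, y)} for y ≠ x and K(x)(x) = 1 − ∑_{y ≠ x} K(x)(y). Then K is a stochastic matrix satisfying detailed balance with respect to π, i.e. π(x) · K(x)(y) = π(y) · K(y)(x) for all x, y ∈ X, and consequently π is a stationary distribution of K. -/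
/-- **Detailed balance for factorized (delayed) acceptance.**
Let `π` be an everywhere-positive probability mass function on a finite nonempty type `X`,
let `q` be a proposal kernel whose support is symmetric off the diagonal, and let
`a 1, …, a k` be acceptance factors which, on supported moves `x ≠ y`, are positive,
satisfy `a j (x, y) · a j (y, x) = 1`, and whose product equals the Metropolis–Hastings
ratio `(π y · q y x) / (π x · q x y)`.  Define the kernel `K` by
`K x y = q x y · ∏ j, min 1 (a j (x, y))` for `y ≠ x`, with the diagonal entry collecting
the remaining mass.  Then `K` is a stochastic matrix satisfying detailed balance with
respect to `π`, and consequently `π` is a stationary distribution of `K`. -/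
theorem factorized_acceptance_detailed_balance
    {X : Type*} [Fintype X] [Nonempty X] [DecidableEq X]
    (π : X → ℝ) (hπ0 : ∀ x, 0 < π x) (hπ1 : ∑ x, π x = 1)
    (q : X → X → ℝ) (hq0 : ∀ x y, 0 ≤ q x y) (hq1 : ∀ x, ∑ y, q x y = 1)
    (hqsym : ∀ x y, x ≠ y → (0 < q x y ↔ 0 < q y x))
    (k : ℕ) (a : Fin k → X × X → ℝ)
    (ha : ∀ x y, x ≠ y → 0 < q x y →
      ∀ j, 0 < a j (x, y) ∧ a j (x, y) * a j (y, x) = 1)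
    (haprod : ∀ x y, x ≠ y → 0 < q x y →
      ∏ j, a j (x, y) = (π y * q y x) / (π x * q x y))
    (K : X → X → ℝ)
    (hK : ∀ x y, K x y =
      if y = x then
        1 - ∑ y' ∈ Finset.univ.erase x, q x y' * ∏ j, min 1 (a j (x, y'))
      else q x y * ∏ j, min 1 (a j (x, y))) :
    (∀ x y, 0 ≤ K x y) ∧ (∀ x, ∑ y, K x y = 1) ∧
    (∀ x y, π x * K x y = π y * K y x) ∧
    (∀ y, ∑ x, π x * K x y = π y) := by
  -- off-diagonal entries are nonnegative and dominated by q
  have hmin0 : ∀ x y, x ≠ y → 0 < q x y → ∀ j, 0 ≤ min 1 (a j (x, y)) := by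
    intro x y hxy h j
    exact le_min zero_le_one (le_of_lt (ha x y hxy h j).1)
  have hoff : ∀ x y, x ≠ y → 0 ≤ q x y * ∏ j, min 1 (a j (x, y)) := by
    intro x y hxy
    rcases eq_or_lt_of_le (hq0 x y) with h | h
    · rw [← h]; simp
    · exact mul_nonneg h.le (Finset.prod_nonneg fun j _ => hmin0 x y hxy h j)
  have hle : ∀ x y, x ≠ y → q x y * ∏ j, min 1 (a j (x, y)) ≤ q x y := by
    intro x y hxy
    rcases eq_or_lt_of_le (hq0 x y) with h | h
    · rw [← h]; simp
    · calc q x y * ∏ j, min 1 (a j (x, y)) ≤ q x y * 1 := by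
            refine mul_le_mul_of_nonneg_left ?_ h.le
            exact Finset.prod_le_one (fun j _ => hmin0 x y hxy h j)
              (fun j _ => min_le_left _ _)
          _ = q x y := mul_one _
  -- nonnegativity
  have hnonneg : ∀ x y, 0 ≤ K x y := by
    intro x y
    rw [hK x y]
    by_cases hxy : y = x
    · rw [if_pos hxy]
      have h1 : ∑ y' ∈ Finset.univ.erase x, q x y' * ∏ j, min 1 (a j (x, y'))
          ≤ ∑ y' ∈ Finset.univ.erase x, q x y' :=
        Finset.sum_le_sum fun y' hy' => hle x y' (Finset.ne_of_mem_erase hy').symm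
      have h2 : ∑ y' ∈ Finset.univ.erase x, q x y' ≤ ∑ y', q x y' :=
        Finset.sum_le_sum_of_subset_of_nonneg (Finset.erase_subset _ _)
          (fun i _ _ => hq0 x i)
      rw [hq1 x] at h2
      linarith
    · rw [if_neg hxy]; exact hoff x y (Ne.symm hxy)
  -- row sums
  have hrow : ∀ x, ∑ y, K x y = 1 := by
    intro x
    rw [← Finset.add_sum_erase Finset.univ (K x) (Finset.mem_univ x)]
    have h1 : ∑ y ∈ Finset.univ.erase x, K x y
        = ∑ y ∈ Finset.univ.erase x, q x y * ∏ j, min 1 (a j (x, y)) :=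
      Finset.sum_congr rfl fun y hy => by
        rw [hK x y, if_neg (Finset.ne_of_mem_erase hy)]
    rw [h1, hK x x, if_pos rfl]; ring
  -- detailed balance (off-diagonal core)
  have hdb0 : ∀ x y, x ≠ y →
      π x * (q x y * ∏ j, min 1 (a j (x, y)))
        = π y * (q y x * ∏ j, min 1 (a j (y, x))) := by
    intro x y hxy
    rcases eq_or_lt_of_le (hq0 x y) with h | h
    · have h' : q y x = 0 := by
        by_contra hc
        have h2 : 0 < q y x := lt_of_le_of_ne (hq0 y x) (Ne.symm hc)
        have := (hqsym x y hxy).mpr h2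
        rw [← h] at this; exact lt_irrefl 0 this
      rw [← h, h']; ring
    · have h' : 0 < q y x := (hqsym x y hxy).mp h
      have key : ∀ j, min 1 (a j (x, y)) = a j (x, y) * min 1 (a j (y, x)) := by
        intro j
        obtain ⟨hpos, hinv⟩ := ha x y hxy h j
        obtain ⟨hpos', _⟩ := ha y x (Ne.symm hxy) h' j
        rcases le_total (a j (x, y)) 1 with hle1 | hle1
        · have h1 : 1 ≤ a j (y, x) := by nlinarith
          rw [min_eq_right hle1, min_eq_left h1, mul_one]
        · have h1 : a j (y, x) ≤ 1 := by nlinarith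
          rw [min_eq_left hle1, min_eq_right h1]; exact hinv.symm
      have hprod : ∏ j, min 1 (a j (x, y))
          = (∏ j, a j (x, y)) * ∏ j, min 1 (a j (y, x)) := by
        rw [← Finset.prod_mul_distrib]
        exact Finset.prod_congr rfl fun j _ => key j
      rw [hprod, haprod x y hxy h]
      have hπx := (hπ0 x).ne'
      have hπy := (hπ0 y).ne'
      field_simp
  -- detailed balance, all pairs
  have hdb : ∀ x y, π x * K x y = π y * K y x := by
    intro x y
    by_cases hxy : x = y
    · rw [hxy]
    · rw [hK x y, hK y x, if_neg (Ne.symm hxy), if_neg hxy]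
      exact hdb0 x y hxy
  refine ⟨hnonneg, hrow, hdb, ?_⟩
  intro y
  calc ∑ x, π x * K x y = ∑ x, π y * K y x := Finset.sum_congr rfl fun x _ => hdb x y
    _ = π y * ∑ x, K y x := (Finset.mul_sum _ _ _).symm
    _ = π y := by rw [hrow y, mul_one]
end

section
/- Exponential growth of the feature space with depth: with m ≥ 1, l ≥ 1, and q : ℕ → ℤ defined by q(0) = m and q(d) = l · (2^{∑_{t=0}^{d−1} q(t)} − 1) − ∑_{t=1}^{d−1} q(t) for d ≥ 1, one has q(d) ≥ 1 for every d ≥ 1, and q(d+1) ≥ 2^{q(d)} for every d ≥ 1. -/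
/-!
Write `S d = ∑_{t<d} q t`. For `d ≥ 1` the recursion says exactly that
`S (d+1) = m + l (2^{S d} - 1)`, so `S d ≥ m ≥ 1` and
`q d = S (d+1) - S d ≥ 2^{S d} - S d`. Since `2^n - n ≥ 2^k` whenever `k < n`, taking `k = 0`
gives `q d ≥ 1`, and taking `k = q d < S (d+1)` gives `q (d+1) ≥ 2^{q d}`.
-/

theorem Nat.two_pow_add_le_two_pow {k n : ℕ} (h : k < n) : 2 ^ k + n ≤ 2 ^ n := by
  induction n, h using Nat.le_induction with
  | base => rw [pow_succ]; linarith [k.lt_two_pow_self]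
  | succ n _ ih => rw [pow_succ]; linarith [n.one_le_two_pow]

theorem Int.two_pow_add_le_two_pow_toNat {k : ℕ} {n : ℤ} (h : (k : ℤ) < n) :
    2 ^ k + n ≤ 2 ^ n.toNat := by
  lift n to ℕ using by omega
  exact_mod_cast Nat.two_pow_add_le_two_pow (by exact_mod_cast h)

theorem Finset.sum_range_eq_add_sum_Icc {M : Type*} [AddCommMonoid M] (f : ℕ → M) {d : ℕ}
    (hd : 1 ≤ d) : ∑ t ∈ range d, f t = f 0 + ∑ t ∈ Icc 1 (d - 1), f t := by
  have h : range d = insert 0 (Icc 1 (d - 1)) := by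
    ext x
    simp only [mem_range, mem_insert, mem_Icc]
    omega
  rw [h, sum_insert (by simp)]

namespace FeatureCount

variable {m l : ℤ} {q : ℕ → ℤ} (hq0 : q 0 = m)
  (hqd : ∀ d : ℕ, 1 ≤ d →
    q d = l * (2 ^ (∑ t ∈ Finset.range d, q t).toNat - 1) - ∑ t ∈ Finset.Icc 1 (d - 1), q t)
include hq0 hqd

theorem sum_range_succ_eq {d : ℕ} (hd : 1 ≤ d) :
    ∑ t ∈ Finset.range (d + 1), q t = m + l * (2 ^ (∑ t ∈ Finset.range d, q t).toNat - 1) := by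
  rw [Finset.sum_range_succ]
  linear_combination Finset.sum_range_eq_add_sum_Icc q hd + hqd d hd + hq0

theorem le_sum_range (hl : 0 ≤ l) {d : ℕ} (hd : 1 ≤ d) :
    m ≤ ∑ t ∈ Finset.range d, q t := by
  obtain ⟨n, rfl⟩ : ∃ n, d = n + 1 := ⟨d - 1, by omega⟩
  rcases n.eq_zero_or_pos with rfl | hn
  · simp [hq0]
  · rw [sum_range_succ_eq hq0 hqd hn]
    have : (1 : ℤ) ≤ 2 ^ (∑ t ∈ Finset.range n, q t).toNat := one_le_pow₀ (by norm_num)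
    linarith [mul_nonneg hl (sub_nonneg.2 this)]

theorem two_pow_le_of_lt_sum_range (hm : 1 ≤ m) (hl : 1 ≤ l) {d k : ℕ} (hd : 1 ≤ d)
    (hk : (k : ℤ) < ∑ t ∈ Finset.range d, q t) : 2 ^ k ≤ q d := by
  set S := ∑ t ∈ Finset.range d, q t
  have hq : q d = m + l * (2 ^ S.toNat - 1) - S := by
    rw [← sum_range_succ_eq hq0 hqd hd, Finset.sum_range_succ]
    ring
  have hpow : 2 ^ k + S ≤ 2 ^ S.toNat := Int.two_pow_add_le_two_pow_toNat hk
  have : 2 ^ S.toNat - 1 ≤ l * (2 ^ S.toNat - 1) :=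
    le_mul_of_one_le_left (sub_nonneg.2 (one_le_pow₀ (by norm_num))) hl
  linarith

end FeatureCount

/-- **Exponential growth of the feature space with depth.**
With `m ≥ 1`, `l ≥ 1`, and `q : ℕ → ℤ` defined by `q 0 = m` and
`q d = l · (2 ^ (∑_{t=0}^{d−1} q t) − 1) − ∑_{t=1}^{d−1} q t` for `d ≥ 1`, one has
`q d ≥ 1` for every `d ≥ 1`, and `q (d+1) ≥ 2 ^ (q d)` for every `d ≥ 1`. -/
theorem feature_count_exponential_growth (m l : ℤ) (hm : 1 ≤ m) (hl : 1 ≤ l)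
    (q : ℕ → ℤ) (hq0 : q 0 = m)
    (hqd : ∀ d : ℕ, 1 ≤ d →
      q d = l * (2 ^ (∑ t ∈ Finset.range d, q t).toNat - 1)
              - ∑ t ∈ Finset.Icc 1 (d - 1), q t) :
    (∀ d : ℕ, 1 ≤ d → 1 ≤ q d) ∧
    (∀ d : ℕ, 1 ≤ d → (2 : ℤ) ^ (q d).toNat ≤ q (d + 1)) := by
  have hS : ∀ d, 1 ≤ d → m ≤ ∑ t ∈ Finset.range d, q t := fun d hd =>
    FeatureCount.le_sum_range hq0 hqd (by omega) hd
  have hpos : ∀ d, 1 ≤ d → 1 ≤ q d := fun d hd => by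
    simpa using FeatureCount.two_pow_le_of_lt_sum_range hq0 hqd hm hl (k := 0) hd
      (by push_cast; linarith [hS d hd])
  refine ⟨hpos, fun d hd => FeatureCount.two_pow_le_of_lt_sum_range hq0 hqd hm hl (by omega) ?_⟩
  rw [Finset.sum_range_succ, Int.toNat_of_nonneg (by linarith [hpos d hd])]
  linarith [hS d hd]
end
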